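/- arXiv:2402.09715 — 8 statements merged into one kernel-verified Lean document; each statement's English description precedes it below -/
import Mathlib

section
/- Let β > 1 and λ ≥ (β-1)/β be real numbers, let m ≥ 1, and let y, y' ∈ ℝ^m be vectors with 0 < y_i ≤ y'_i for every i and y_j < y'_j for at least one index j (i.e., y' Pareto-dominates y). Then Φ_λ(y') > Φ_λ(y). (This is the sufficiency direction of the Pareto Efficiency theorem for the DPBalance platform utility.) -/
open Finset

/-- The log-transformed DPBalance platform utility
`Φ_λ(y) = -(1/β)·log(Σ_i (y_i/S(y))^(1-β)) + λ·log(S(y))` where `S(y) = Σ_i y_i`. -/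
noncomputable def Phi (β lam : ℝ) {m : ℕ} (y : Fin m → ℝ) : ℝ :=
  -(1 / β) * Real.log (∑ i, (y i / ∑ j, y j) ^ (1 - β)) + lam * Real.log (∑ j, y j)

lemma Phi_eq (β lam : ℝ) (hβ : 1 < β) {m : ℕ} (hm : 1 ≤ m) (y : Fin m → ℝ)
    (hy : ∀ i, 0 < y i) :
    Phi β lam y = -(1 / β) * Real.log (∑ i, (y i) ^ (1 - β))
      + (lam - (β - 1) / β) * Real.log (∑ j, y j) := by
  haveI : Nonempty (Fin m) := Fin.pos_iff_nonempty.mp hm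
  have hS : 0 < ∑ j, y j := Finset.sum_pos (fun i _ => hy i) Finset.univ_nonempty
  have hA : 0 < ∑ i, (y i) ^ (1 - β) :=
    Finset.sum_pos (fun i _ => Real.rpow_pos_of_pos (hy i) _) Finset.univ_nonempty
  have hβ0 : (0:ℝ) < β := lt_trans one_pos hβ
  have h1 : ∑ i, (y i / ∑ j, y j) ^ (1 - β)
      = (∑ i, (y i) ^ (1 - β)) / (∑ j, y j) ^ (1 - β) := by
    rw [Finset.sum_div]
    exact Finset.sum_congr rfl fun i _ => Real.div_rpow (hy i).le hS.le _
  rw [Phi, h1, Real.log_div hA.ne' (Real.rpow_pos_of_pos hS _).ne', Real.log_rpow hS]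
  ring

/-- Sufficiency direction of Pareto Efficiency: if `β > 1`, `λ ≥ (β-1)/β`, and `y'`
Pareto-dominates `y` (entrywise `≥` with strict inequality somewhere, all entries of `y`
positive), then `Φ_λ(y') > Φ_λ(y)`. -/
theorem stmt0 (β lam : ℝ) (hβ : 1 < β) (hlam : (β - 1) / β ≤ lam)
    (m : ℕ) (hm : 1 ≤ m) (y y' : Fin m → ℝ)
    (hy : ∀ i, 0 < y i) (hle : ∀ i, y i ≤ y' i) (hlt : ∃ j, y j < y' j) :
    Phi β lam y < Phi β lam y' := by
  haveI : Nonempty (Fin m) := Fin.pos_iff_nonempty.mp hm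
  have hy' : ∀ i, 0 < y' i := fun i => (hy i).trans_le (hle i)
  have hS : 0 < ∑ j, y j := Finset.sum_pos (fun i _ => hy i) Finset.univ_nonempty
  have hS' : 0 < ∑ j, y' j := Finset.sum_pos (fun i _ => hy' i) Finset.univ_nonempty
  have hβ0 : (0:ℝ) < β := lt_trans one_pos hβ
  have hA' : 0 < ∑ i, (y' i) ^ (1 - β) :=
    Finset.sum_pos (fun i _ => Real.rpow_pos_of_pos (hy' i) _) Finset.univ_nonempty
  have hAlt : (∑ i, (y' i) ^ (1 - β)) < ∑ i, (y i) ^ (1 - β) := by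
    obtain ⟨j, hj⟩ := hlt
    refine Finset.sum_lt_sum (fun i _ => Real.rpow_le_rpow_of_nonpos (hy i) (hle i)
      (by linarith)) ⟨j, Finset.mem_univ j, ?_⟩
    exact Real.rpow_lt_rpow_of_neg (hy j) hj (by linarith)
  rw [Phi_eq β lam hβ hm y hy, Phi_eq β lam hβ hm y' hy']
  have h1 : -(1 / β) * Real.log (∑ i, (y i) ^ (1 - β))
      < -(1 / β) * Real.log (∑ i, (y' i) ^ (1 - β)) := by
    have := Real.log_lt_log hA' hAlt
    have hβinv : 0 < 1 / β := by positivity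
    have hneg : -(1 / β) < 0 := by linarith
    nlinarith
  have h2 : (lam - (β - 1) / β) * Real.log (∑ j, y j)
      ≤ (lam - (β - 1) / β) * Real.log (∑ j, y' j) := by
    refine mul_le_mul_of_nonneg_left ?_ (by linarith)
    exact Real.log_le_log hS (Finset.sum_le_sum fun i _ => hle i)
  linarith
end

section
/- Let β > 1 and let λ be a real number with 0 ≤ λ < (β-1)/β. Then there exist m ≥ 2 and vectors y, y' ∈ ℝ^m with all entries positive, y_i ≤ y'_i for every i, and y_j < y'_j for at least one index j, such that Φ_λ(y') < Φ_λ(y). Concretely, one may take y = (1, 1, …, 1, n) ∈ ℝ^{n+1}, y' agreeing with y except y'_{n+1} = n + 2δ·n where δ = (1/2)·((1 + n^{-β})^{(1/β)·1/((β-1)/β − λ)} − 1) > 0. (This shows Pareto Efficiency fails when λ < (β-1)/β.) -/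
open Finset

/-- Pareto Efficiency fails when `0 ≤ λ < (β-1)/β` (with `β > 1`): there exist `m ≥ 2` and
positive vectors `y ≤ y'` (strictly somewhere) with `Φ_λ(y') < Φ_λ(y)`. -/
theorem stmt1 (β lam : ℝ) (hβ : 1 < β) (hlam0 : 0 ≤ lam) (hlam : lam < (β - 1) / β) :
    ∃ m : ℕ, 2 ≤ m ∧ ∃ y y' : Fin m → ℝ,
      (∀ i, 0 < y i) ∧ (∀ i, y i ≤ y' i) ∧ (∃ j, y j < y' j) ∧
      Phi β lam y' < Phi β lam y := by
  have hβ0 : (0:ℝ) < β := by linarith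
  set ε : ℝ := (β - 1) / β - lam with hεdef
  have hε : 0 < ε := by simp only [hεdef]; linarith
  have hlam1 : lam < 1 := by
    have : (β - 1) / β < 1 := by
      rw [div_lt_one hβ0]; linarith
    linarith
  set K : ℝ := (1 - lam) * Real.log 2 / ε + 1 with hKdef
  have hlog2 : 0 < Real.log 2 := Real.log_pos (by norm_num)
  have hK1 : 1 ≤ K := by
    have : 0 ≤ (1 - lam) * Real.log 2 / ε :=
      div_nonneg (mul_nonneg (by linarith) hlog2.le) hε.le
    simp only [hKdef]; linarith
  have hKlog2 : Real.log 2 < K := by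
    have := Real.log_two_lt_d9
    linarith
  set c : ℝ := Real.exp K - 1 with hcdef
  have hc1 : 1 < c := by
    have h2 : (2:ℝ) < Real.exp K := by
      calc (2:ℝ) = Real.exp (Real.log 2) := (Real.exp_log (by norm_num)).symm
        _ < Real.exp K := Real.exp_lt_exp.mpr hKlog2
    simp only [hcdef]; linarith
  have hc0 : 0 < c := by linarith
  refine ⟨2, le_refl 2, ![1, 1], ![1, c], ?_, ?_, ⟨1, by simp; linarith⟩, ?_⟩
  · intro i; fin_cases i <;> simp <;> linarith
  · intro i; fin_cases i <;> simp <;> linarith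
  -- main inequality
  have hS : (1:ℝ) + c = Real.exp K := by simp [hcdef]
  have hSpos : (0:ℝ) < 1 + c := by linarith
  have hsum1 : (∑ j, (![1, c] : Fin 2 → ℝ) j) = 1 + c := by
    simp [Fin.sum_univ_two]
  have hsum0 : (∑ j, (![1, (1:ℝ)] : Fin 2 → ℝ) j) = 2 := by
    simp [Fin.sum_univ_two]; norm_num
  -- value at y
  have hPhi0 : Phi β lam ![1, (1:ℝ)] = (lam - 1) * Real.log 2 := by
    rw [Phi, hsum0]
    have h12 : ((1:ℝ)/2) ^ (1 - β) = (2:ℝ) ^ (β - 1) := by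
      rw [one_div, Real.inv_rpow (by norm_num : (0:ℝ) ≤ 2),
        ← Real.rpow_neg (by norm_num : (0:ℝ) ≤ 2), neg_sub]
    have hsum : (∑ i, ((![1, (1:ℝ)]) i / 2) ^ (1 - β)) = 2 * ((1:ℝ)/2) ^ (1 - β) := by
      simp [Fin.sum_univ_two]; ring
    rw [hsum]
    rw [Real.log_mul (by norm_num) (by positivity), Real.log_rpow (by norm_num)]
    rw [Real.log_div one_ne_zero (by norm_num), Real.log_one]
    field_simp
    ring
  rw [hPhi0]
  -- bound at y'
  have hKpos : 0 < K := by linarith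
  have hlogS : Real.log (1 + c) = K := by rw [hS, Real.log_exp]
  have ha : (0:ℝ) < ((1:ℝ) / (1 + c)) ^ (1 - β) := Real.rpow_pos_of_pos (by positivity) _
  have hb : (0:ℝ) < (c / (1 + c)) ^ (1 - β) := Real.rpow_pos_of_pos (by positivity) _
  have hsum' : (∑ i, ((![1, c]) i / (1 + c)) ^ (1 - β))
      = ((1:ℝ)/(1+c)) ^ (1 - β) + (c/(1+c)) ^ (1 - β) := by
    simp [Fin.sum_univ_two]
  have hlogbound : (β - 1) * K ≤
      Real.log (((1:ℝ)/(1+c)) ^ (1 - β) + (c/(1+c)) ^ (1 - β)) := by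
    have h1 : Real.log (((1:ℝ)/(1+c)) ^ (1 - β)) = (β - 1) * K := by
      rw [Real.log_rpow (by positivity), Real.log_div one_ne_zero (by positivity),
        Real.log_one, hlogS]
      ring
    calc (β - 1) * K = Real.log (((1:ℝ)/(1+c)) ^ (1 - β)) := h1.symm
      _ ≤ _ := Real.log_le_log ha (by linarith)
  have : Phi β lam ![1, c] ≤ -ε * K := by
    rw [Phi, hsum1, hsum', hlogS]
    have h2 : -(1/β) * Real.log (((1:ℝ)/(1+c)) ^ (1 - β) + (c/(1+c)) ^ (1 - β))
        ≤ -(1/β) * ((β - 1) * K) := by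
      have hβinv : (0:ℝ) < 1/β := by positivity
      nlinarith [hlogbound]
    have h3 : -(1/β) * ((β - 1) * K) + lam * K = -ε * K := by
      simp only [hεdef]; field_simp; ring
    linarith
  have hfinal : -ε * K < (lam - 1) * Real.log 2 := by
    have hεK : ε * K = (1 - lam) * Real.log 2 + ε := by
      simp only [hKdef]; field_simp
    nlinarith
  linarith
end

section
/- Let β > 1, let m ≥ 1, and let y₁, …, y_m be positive real numbers such that for every index i, y_i^{-β} ≤ Σ_{j=1}^m y_j^{1-β}. Then min_i y_i ≥ 1/m. -/
open Finset

/-- Sharing Incentive core inequality: if `β > 1`, the `y_i > 0` and every `i` satisfies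
`y_i^{-β} ≤ Σ_j y_j^{1-β}`, then `min_i y_i ≥ 1/m`. -/
theorem stmt3 (β : ℝ) (hβ : 1 < β) (m : ℕ) (hm : 1 ≤ m) (y : Fin m → ℝ)
    (hy : ∀ i, 0 < y i)
    (h : ∀ i, y i ^ (-β) ≤ ∑ j, y j ^ (1 - β)) :
    ∀ i, (1 : ℝ) / m ≤ y i := by
  have hmpos : (0 : ℝ) < m := by exact_mod_cast Nat.lt_of_lt_of_le Nat.zero_lt_one hm
  have hne : (univ : Finset (Fin m)).Nonempty := by
    simp [Finset.univ_nonempty_iff, Fin.pos_iff_nonempty.mp (Nat.lt_of_lt_of_le Nat.zero_lt_one hm)]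
  obtain ⟨k, -, hk⟩ := Finset.exists_min_image univ y hne
  have hsum : ∑ j, y j ^ (1 - β) ≤ m * y k ^ (1 - β) := by
    calc ∑ j, y j ^ (1 - β) ≤ ∑ _j : Fin m, y k ^ (1 - β) := by
          apply Finset.sum_le_sum
          intro j _
          exact Real.rpow_le_rpow_of_nonpos (hy k) (hk j (mem_univ j)) (by linarith)
      _ = m * y k ^ (1 - β) := by simp [mul_comm]
  have hkk : y k ^ (-β) ≤ m * y k ^ (1 - β) := (h k).trans hsum
  have hsplit : y k ^ (-β) = y k ^ (1 - β) * (y k)⁻¹ := by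
    rw [← Real.rpow_neg_one, ← Real.rpow_add (hy k)]
    ring_nf
  have hpow : (0:ℝ) < y k ^ (1 - β) := Real.rpow_pos_of_pos (hy k) _
  have hinv : (y k)⁻¹ ≤ m := by
    rw [hsplit, mul_comm (m:ℝ)] at hkk
    exact le_of_mul_le_mul_left (by linarith [hkk]) hpow
  have hyk : 1 / (m:ℝ) ≤ y k := by
    rw [div_le_iff₀ hmpos]
    have := (inv_le_iff_one_le_mul₀ (hy k)).mp hinv
    linarith [this]
  intro i
  exact hyk.trans (hk i (mem_univ i))
end

section
/- Let β > 1, let m ≥ 1 and K ≥ 1, let x_i, μ_i, a_i (for i = 1,…,m) be positive reals, let γ_{ik} (for i = 1,…,m, k = 1,…,K) satisfy 0 ≤ γ_{ik} ≤ μ_i, and let λ_k ≥ 0 (for k = 1,…,K). Suppose the KKT stationarity conditions hold: for every i, (μ_i a_i)^{1-β}·x_i^{-β} = Σ_{k=1}^K λ_k γ_{ik} a_i; and the complementary-slackness identity holds: Σ_{k=1}^K λ_k·(Σ_{i=1}^m γ_{ik} x_i a_i) = Σ_{k=1}^K λ_k. Then for every i, μ_i a_i x_i ≥ 1/m. (Sharing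 Incentive is satisfied when β > 1 and λ = (β-1)/β.) -/
open Finset

/-!
With `s i = μ i * a i * x i` and `Λ = ∑ k, lam k`, stationarity together with `γ i k ≤ μ i`
gives `s i ^ (-β) ≤ Λ`, and substituting stationarity into complementary slackness gives
`Λ = ∑ j, s j ^ (1 - β)`. At the smallest share `s₀` the second sum is at most `m * s₀ ^ (1 - β)`
because `1 - β ≤ 0`, so `s₀ ^ (-β) ≤ m * s₀ * s₀ ^ (-β)`, i.e. `1 ≤ m * s₀`.
-/

theorem one_div_card_le_of_rpow_neg_le_sum_rpow {ι : Type*} [Fintype ι] {β : ℝ} (hβ : 1 ≤ β)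
    {s : ι → ℝ} (hs : ∀ i, 0 < s i) (hle : ∀ i, s i ^ (-β) ≤ ∑ j, s j ^ (1 - β)) (i : ι) :
    1 / (Fintype.card ι : ℝ) ≤ s i := by
  obtain ⟨i₀, -, hmin⟩ := exists_min_image univ s ⟨i, mem_univ i⟩
  have hsum_le : ∑ j, s j ^ (1 - β) ≤ Fintype.card ι * s i₀ ^ (1 - β) := by
    simpa using sum_le_card_nsmul univ (fun j => s j ^ (1 - β)) _ fun j _ =>
      Real.rpow_le_rpow_of_nonpos (hs i₀) (hmin j (mem_univ j)) (by linarith)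
  have hpos : 0 < s i₀ ^ (-β) := Real.rpow_pos_of_pos (hs i₀) _
  have hmin_share : 1 ≤ Fintype.card ι * s i₀ := by
    have key : s i₀ ^ (-β) ≤ (Fintype.card ι * s i₀) * s i₀ ^ (-β) := by
      calc s i₀ ^ (-β) ≤ Fintype.card ι * s i₀ ^ (1 - β) := (hle i₀).trans hsum_le
        _ = (Fintype.card ι * s i₀) * s i₀ ^ (-β) := by
          rw [sub_eq_neg_add, Real.rpow_add (hs i₀), Real.rpow_one]; ring
    exact le_of_mul_le_mul_right (by simpa using key) hpos
  have hcard : (0 : ℝ) < Fintype.card ι := by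
    exact_mod_cast Fintype.card_pos_iff.mpr ⟨i⟩
  calc 1 / (Fintype.card ι : ℝ) ≤ s i₀ := by rw [div_le_iff₀' hcard]; exact hmin_share
    _ ≤ s i := hmin i (mem_univ i)

theorem rpow_one_sub_mul_rpow_neg {p x : ℝ} (hp : 0 < p) (hx : 0 ≤ x) (β : ℝ) :
    p ^ (1 - β) * x ^ (-β) = (p * x) ^ (-β) * p := by
  rw [Real.mul_rpow hp.le hx, sub_eq_neg_add, Real.rpow_add hp, Real.rpow_one]
  ring

section Stationarity

variable {ι κ : Type*} [Fintype ι] [Fintype κ] {β : ℝ}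

theorem rpow_neg_le_sum_of_stationary {μ a x : ℝ} {γ lam : κ → ℝ}
    (hμ : 0 < μ) (ha : 0 < a) (hx : 0 < x) (hγμ : ∀ k, γ k ≤ μ) (hlam : ∀ k, 0 ≤ lam k)
    (hstat : (μ * a) ^ (1 - β) * x ^ (-β) = ∑ k, lam k * γ k * a) :
    (μ * a * x) ^ (-β) ≤ ∑ k, lam k := by
  have hμa : 0 < μ * a := mul_pos hμ ha
  have hbound : ∑ k, lam k * γ k * a ≤ (∑ k, lam k) * (μ * a) := by
    rw [sum_mul]
    refine sum_le_sum fun k _ => ?_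
    rw [mul_assoc]
    gcongr
    exacts [hlam k, hγμ k]
  rw [← hstat, rpow_one_sub_mul_rpow_neg hμa hx.le] at hbound
  exact le_of_mul_le_mul_right hbound hμa

theorem sum_eq_sum_rpow_of_stationary {x μ a : ι → ℝ} {γ : ι → κ → ℝ} {lam : κ → ℝ}
    (hx : ∀ i, 0 < x i) (hμ : ∀ i, 0 < μ i) (ha : ∀ i, 0 < a i)
    (hstat : ∀ i, (μ i * a i) ^ (1 - β) * x i ^ (-β) = ∑ k, lam k * γ i k * a i)
    (hcs : ∑ k, lam k * ∑ i, γ i k * x i * a i = ∑ k, lam k) :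
    ∑ k, lam k = ∑ i, (μ i * a i * x i) ^ (1 - β) := by
  have hswap : ∑ k, lam k * ∑ i, γ i k * x i * a i
      = ∑ i, (∑ k, lam k * γ i k * a i) * x i := by
    simp_rw [mul_sum, sum_mul]
    rw [sum_comm]
    exact sum_congr rfl fun i _ => sum_congr rfl fun k _ => by ring
  rw [← hcs, hswap]
  refine sum_congr rfl fun i _ => ?_
  have hs : μ i * a i * x i ≠ 0 := (mul_pos (mul_pos (hμ i) (ha i)) (hx i)).ne'
  rw [← hstat i, rpow_one_sub_mul_rpow_neg (mul_pos (hμ i) (ha i)) (hx i).le,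
    sub_eq_neg_add, Real.rpow_add_one hs]
  ring

end Stationarity

theorem stmt4_general (β : ℝ) (hβ : 1 < β) (m K : ℕ)
    (x μ a : Fin m → ℝ) (γ : Fin m → Fin K → ℝ) (lam : Fin K → ℝ)
    (hx : ∀ i, 0 < x i) (hμ : ∀ i, 0 < μ i) (ha : ∀ i, 0 < a i)
    (hγμ : ∀ i k, γ i k ≤ μ i)
    (hlam : ∀ k, 0 ≤ lam k)
    (hstat : ∀ i, (μ i * a i) ^ (1 - β) * x i ^ (-β) = ∑ k, lam k * γ i k * a i)
    (hcs : ∑ k, lam k * ∑ i, γ i k * x i * a i = ∑ k, lam k) :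
    ∀ i, (1 : ℝ) / m ≤ μ i * a i * x i := by
  intro i
  have hshare_pos : ∀ j, 0 < μ j * a j * x j := fun j => mul_pos (mul_pos (hμ j) (ha j)) (hx j)
  have hle : ∀ j, (μ j * a j * x j) ^ (-β) ≤ ∑ j', (μ j' * a j' * x j') ^ (1 - β) := fun j => by
    rw [← sum_eq_sum_rpow_of_stationary hx hμ ha hstat hcs]
    exact rpow_neg_le_sum_of_stationary (hμ j) (ha j) (hx j) (hγμ j) hlam (hstat j)
  simpa using one_div_card_le_of_rpow_neg_le_sum_rpow hβ.le hshare_pos hle i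

/-- Sharing Incentive when `β > 1` and `λ = (β-1)/β`: under the KKT stationarity conditions
`(μ_i a_i)^{1-β} x_i^{-β} = Σ_k λ_k γ_{ik} a_i` and complementary slackness
`Σ_k λ_k (Σ_i γ_{ik} x_i a_i) = Σ_k λ_k`, every data analyst's weighted dominant share
satisfies `μ_i a_i x_i ≥ 1/m`. -/
theorem stmt4 (β : ℝ) (hβ : 1 < β) (m K : ℕ) (hm : 1 ≤ m) (hK : 1 ≤ K)
    (x μ a : Fin m → ℝ) (γ : Fin m → Fin K → ℝ) (lam : Fin K → ℝ)
    (hx : ∀ i, 0 < x i) (hμ : ∀ i, 0 < μ i) (ha : ∀ i, 0 < a i)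
    (hγ0 : ∀ i k, 0 ≤ γ i k) (hγμ : ∀ i k, γ i k ≤ μ i)
    (hlam : ∀ k, 0 ≤ lam k)
    (hstat : ∀ i, (μ i * a i) ^ (1 - β) * x i ^ (-β) = ∑ k, lam k * γ i k * a i)
    (hcs : ∑ k, lam k * ∑ i, γ i k * x i * a i = ∑ k, lam k) :
    ∀ i, (1 : ℝ) / m ≤ μ i * a i * x i :=
  stmt4_general β hβ m K x μ a γ lam hx hμ ha hγμ hlam hstat hcs
end

section
/- Let 0 < β < 1, let m ≥ 2, and let r₁, …, r_m be real numbers with 0 < r_i ≤ 1 for all i, such that r_{i₀} = 1 for some index i₀ and r_j < 1 for some index j. Then r_{i₀}^{-1/β} / (Σ_{i=1}^m r_i^{(β-1)/β}) < 1/m; in particular there exists an analyst whose weighted dominant share (γ_i/μ_i)^{-1/β} / Σ_j (γ_j/μ_j)^{(β-1)/β} is strictly below the equal share 1/m, so Sharing Incentive fails when 0 < β < 1 and λ = (β-1)/β. -/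
open Finset

/-- Sharing Incentive fails when `0 < β < 1` and `λ = (β-1)/β`: with demand ratios
`r_i = γ_i/μ_i ∈ (0,1]`, `r_{i₀} = 1`, and `r_j < 1` for some `j`, the analyst `i₀`'s
weighted dominant share `r_{i₀}^{-1/β} / Σ_i r_i^{(β-1)/β}` is strictly below `1/m`. -/
theorem stmt5 (β : ℝ) (hβ0 : 0 < β) (hβ1 : β < 1) (m : ℕ) (hm : 2 ≤ m)
    (r : Fin m → ℝ) (hr0 : ∀ i, 0 < r i) (hr1 : ∀ i, r i ≤ 1)
    (i₀ : Fin m) (hi₀ : r i₀ = 1) (j : Fin m) (hj : r j < 1) :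
    r i₀ ^ (-1 / β) / (∑ i, r i ^ ((β - 1) / β)) < 1 / m := by
  have hexp : (β - 1) / β < 0 := div_neg_of_neg_of_pos (by linarith) hβ0
  have hsum : (m : ℝ) < ∑ i, r i ^ ((β - 1) / β) := by
    have : ∑ _i : Fin m, (1 : ℝ) < ∑ i, r i ^ ((β - 1) / β) := by
      refine Finset.sum_lt_sum (fun i _ => ?_) ⟨j, Finset.mem_univ j, ?_⟩
      · exact Real.one_le_rpow_of_pos_of_le_one_of_nonpos (hr0 i) (hr1 i) hexp.le
      · exact Real.one_lt_rpow_of_pos_of_lt_one_of_neg (hr0 j) hj hexp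
    simpa using this
  have hm' : (0 : ℝ) < m := by positivity
  rw [hi₀, Real.one_rpow]
  calc 1 / (∑ i, r i ^ ((β - 1) / β)) < 1 / (m : ℝ) :=
    one_div_lt_one_div_of_lt hm' hsum
end

section
/- Let β > 0 with β ≠ 1, let m ≥ 1, and let y ∈ ℝ^m have all entries positive with S = Σ_{i=1}^m y_i. Then the dominant fairness satisfies f_β(y) = sgn(1-β)·(Σ_{i=1}^m (y_i/S)^{1-β})^{1/β} ≤ sgn(1-β)·m, with equality if and only if all the y_i are equal. (Hence when the efficiency preference is λ = 0, the allocation giving every data analyst an equal weighted dominant share is the unique maximizer of the platform utility, and Sharing Incentive and Envy-Freeness hold.) -/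
open Finset

/-- Strict Bernoulli inequality for negative exponents. -/
lemma bern_neg_lt {x p : ℝ} (hx : 0 < x) (hx1 : x ≠ 1) (hp : p < 0) :
    1 + p * (x - 1) < x ^ p := by
  rcases le_or_gt (1 + p * (x - 1)) 0 with h0 | h0
  · exact lt_of_le_of_lt h0 (Real.rpow_pos_of_pos hx p)
  · have h1 : Real.log x < x - 1 := Real.log_lt_sub_one_of_pos hx hx1
    have h2 : p * (x - 1) < p * Real.log x := by nlinarith
    have h3 : Real.log (1 + p * (x - 1)) ≤ p * (x - 1) := by
      have := Real.log_le_sub_one_of_pos h0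
      linarith
    calc 1 + p * (x - 1) = Real.exp (Real.log (1 + p * (x - 1))) := (Real.exp_log h0).symm
      _ < Real.exp (Real.log x * p) := by
          apply Real.exp_lt_exp.mpr
          have := mul_comm p (Real.log x)
          linarith
      _ = x ^ p := (Real.rpow_def_of_pos hx p).symm

lemma bern_neg_le {x p : ℝ} (hx : 0 < x) (hp : p < 0) :
    1 + p * (x - 1) ≤ x ^ p := by
  by_cases hx1 : x = 1
  · simp [hx1]
  · exact (bern_neg_lt hx hx1 hp).le

/-- Strict Bernoulli inequality for exponents in (0,1), tangent form. -/
lemma bern_mid_lt {x p : ℝ} (hx : 0 < x) (hx1 : x ≠ 1) (hp0 : 0 < p) (hp1 : p < 1) :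
    x ^ p < 1 + p * (x - 1) := by
  have h := rpow_one_add_lt_one_add_mul_self (s := x - 1) (by linarith) (by
    intro h; exact hx1 (by linarith)) hp0 hp1
  simpa using h

lemma bern_mid_le {x p : ℝ} (hx : 0 < x) (hp0 : 0 < p) (hp1 : p < 1) :
    x ^ p ≤ 1 + p * (x - 1) := by
  by_cases hx1 : x = 1
  · simp [hx1]
  · exact (bern_mid_lt hx hx1 hp0 hp1).le

/-- The dominant fairness `f_β(y) = sgn(1-β)·(Σ_i (y_i/S)^{1-β})^{1/β}` of a positive vector
`y` is at most `sgn(1-β)·m`, with equality iff all entries of `y` are equal. -/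
theorem stmt6 (β : ℝ) (hβ : 0 < β) (hβ1 : β ≠ 1) (m : ℕ) (hm : 1 ≤ m)
    (y : Fin m → ℝ) (hy : ∀ i, 0 < y i) :
    Real.sign (1 - β) * (∑ i, (y i / ∑ j, y j) ^ (1 - β)) ^ (1 / β) ≤
      Real.sign (1 - β) * m ∧
    (Real.sign (1 - β) * (∑ i, (y i / ∑ j, y j) ^ (1 - β)) ^ (1 / β) =
        Real.sign (1 - β) * m ↔ ∀ i j, y i = y j) := by
  have hne : Nonempty (Fin m) := ⟨⟨0, hm⟩⟩
  have huniv : (Finset.univ : Finset (Fin m)).Nonempty := Finset.univ_nonempty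
  set S : ℝ := ∑ j, y j with hSdef
  have hS : 0 < S := Finset.sum_pos (fun i _ => hy i) huniv
  have hM : (0 : ℝ) < m := by exact_mod_cast hm
  set z : Fin m → ℝ := fun i => y i / S with hzdef
  have hz : ∀ i, 0 < z i := fun i => div_pos (hy i) hS
  have hzsum : ∑ i, z i = 1 := by
    rw [hzdef, ← Finset.sum_div, ← hSdef, div_self hS.ne']
  set p : ℝ := 1 - β with hpdef
  set A : ℝ := ∑ i, z i ^ p with hAdef
  have hA : 0 < A := Finset.sum_pos (fun i _ => Real.rpow_pos_of_pos (hz i) _) huniv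
  have hterm : ∀ i, z i ^ p = (m : ℝ) ^ (-p) * ((m : ℝ) * z i) ^ p := by
    intro i
    rw [Real.mul_rpow hM.le (hz i).le, ← mul_assoc, ← Real.rpow_add hM, neg_add_cancel,
      Real.rpow_zero, one_mul]
  have hlin : ∑ i, (1 + p * ((m : ℝ) * z i - 1)) = m := by
    have h1 : ∑ i, (1 + p * ((m : ℝ) * z i - 1))
        = m + p * ((m : ℝ) * (∑ i, z i) - m) := by
      rw [Finset.sum_add_distrib, Finset.sum_const, Finset.card_univ, Fintype.card_fin,
        nsmul_eq_mul, mul_one, ← Finset.mul_sum]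
      congr 1
      congr 1
      rw [Finset.sum_sub_distrib, Finset.sum_const, Finset.card_univ, Fintype.card_fin,
        nsmul_eq_mul, mul_one, ← Finset.mul_sum]
    rw [h1, hzsum, mul_one, sub_self, mul_zero, add_zero]
  have hmpow : (m : ℝ) * (m : ℝ) ^ (-p) = (m : ℝ) ^ β := by
    calc (m : ℝ) * (m : ℝ) ^ (-p) = (m : ℝ) ^ (1 : ℝ) * (m : ℝ) ^ (-p) := by
          rw [Real.rpow_one]
      _ = (m : ℝ) ^ (1 + -p) := (Real.rpow_add hM _ _).symm
      _ = (m : ℝ) ^ β := by rw [hpdef]; ring_nf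
  have heq_iff : (∀ i, (m : ℝ) * z i = 1) ↔ (∀ i j, y i = y j) := by
    constructor
    · intro h i j
      have hi : y i * m = S := by
        have := h i
        rw [hzdef] at this
        field_simp at this
        linarith
      have hj : y j * m = S := by
        have := h j
        rw [hzdef] at this
        field_simp at this
        linarith
      have : y i * m = y j * m := by rw [hi, hj]
      exact mul_right_cancel₀ hM.ne' this
    · intro h i
      have hSm : S = m * y i := by
        rw [hSdef, Finset.sum_congr rfl (fun k _ => h k i), Finset.sum_const, Finset.card_univ,
          Fintype.card_fin, nsmul_eq_mul]
      rw [hzdef]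
      simp only
      have h1 : (m : ℝ) ≠ 0 := hM.ne'
      have h2 : y i ≠ 0 := (hy i).ne'
      rw [hSm]
      field_simp
  have hA_eq_of : (∀ i, (m : ℝ) * z i = 1) → A = (m : ℝ) ^ β := by
    intro h
    have ht : ∀ i, z i ^ p = (m : ℝ) ^ (-p) := by
      intro i
      rw [hterm i, h i, Real.one_rpow, mul_one]
    rw [hAdef, Finset.sum_congr rfl (fun i _ => ht i), Finset.sum_const, Finset.card_univ,
      Fintype.card_fin, nsmul_eq_mul, hmpow]
  -- existence of a witness when not all equal
  have hwit : ¬ (∀ i j, y i = y j) → ∃ k, (m : ℝ) * z k ≠ 1 := by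
    intro h
    by_contra h'
    push_neg at h'
    exact h (heq_iff.mp h')
  -- rpow back and forth
  have hAroot_of : A = (m : ℝ) ^ β → A ^ (1 / β) = m := by
    intro h
    rw [h, ← Real.rpow_mul hM.le, mul_one_div, div_self hβ.ne', Real.rpow_one]
  have hA_of_root : A ^ (1 / β) = (m : ℝ) → A = (m : ℝ) ^ β := by
    intro h
    have : (A ^ (1 / β)) ^ β = (m : ℝ) ^ β := by rw [h]
    rwa [← Real.rpow_mul hA.le, one_div, inv_mul_cancel₀ hβ.ne', Real.rpow_one] at this
  rcases lt_or_gt_of_ne hβ1 with hlt | hgt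
  · -- β < 1, p ∈ (0,1), sign = 1
    have hp0 : 0 < p := by rw [hpdef]; linarith
    have hp1 : p < 1 := by rw [hpdef]; linarith
    have hsign : Real.sign (1 - β) = 1 := Real.sign_of_pos (by linarith)
    have hA_le : A ≤ (m : ℝ) ^ β := by
      have : A ≤ ∑ i, (m : ℝ) ^ (-p) * (1 + p * ((m : ℝ) * z i - 1)) := by
        apply Finset.sum_le_sum
        intro i _
        rw [hterm i]
        exact mul_le_mul_of_nonneg_left
          (bern_mid_le (mul_pos hM (hz i)) hp0 hp1) (Real.rpow_nonneg hM.le _)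
      rw [← Finset.mul_sum, hlin, mul_comm, hmpow] at this
      exact this
    have hA_lt : (∃ k, (m : ℝ) * z k ≠ 1) → A < (m : ℝ) ^ β := by
      rintro ⟨k, hk⟩
      have : A < ∑ i, (m : ℝ) ^ (-p) * (1 + p * ((m : ℝ) * z i - 1)) := by
        apply Finset.sum_lt_sum
        · intro i _
          rw [hterm i]
          exact mul_le_mul_of_nonneg_left
            (bern_mid_le (mul_pos hM (hz i)) hp0 hp1) (Real.rpow_nonneg hM.le _)
        · refine ⟨k, Finset.mem_univ k, ?_⟩
          rw [hterm k]
          exact mul_lt_mul_of_pos_left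
            (bern_mid_lt (mul_pos hM (hz k)) hk hp0 hp1) (Real.rpow_pos_of_pos hM _)
      rw [← Finset.mul_sum, hlin, mul_comm, hmpow] at this
      exact this
    rw [hsign, one_mul, one_mul]
    constructor
    · calc A ^ (1 / β) ≤ ((m : ℝ) ^ β) ^ (1 / β) :=
            Real.rpow_le_rpow hA.le hA_le (by positivity)
        _ = m := by
            rw [← Real.rpow_mul hM.le, mul_one_div, div_self hβ.ne', Real.rpow_one]
    · constructor
      · intro h
        by_contra hcon
        have := hA_lt (hwit hcon)
        rw [hA_of_root h] at this
        exact lt_irrefl _ this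
      · intro h
        exact hAroot_of (hA_eq_of (heq_iff.mpr h))
  · -- β > 1, p < 0, sign = -1
    have hp0 : p < 0 := by rw [hpdef]; linarith
    have hsign : Real.sign (1 - β) = -1 := Real.sign_of_neg (by linarith)
    have hA_ge : (m : ℝ) ^ β ≤ A := by
      have : ∑ i, (m : ℝ) ^ (-p) * (1 + p * ((m : ℝ) * z i - 1)) ≤ A := by
        apply Finset.sum_le_sum
        intro i _
        rw [hterm i]
        exact mul_le_mul_of_nonneg_left
          (bern_neg_le (mul_pos hM (hz i)) hp0) (Real.rpow_nonneg hM.le _)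
      rw [← Finset.mul_sum, hlin, mul_comm, hmpow] at this
      exact this
    have hA_gt : (∃ k, (m : ℝ) * z k ≠ 1) → (m : ℝ) ^ β < A := by
      rintro ⟨k, hk⟩
      have : ∑ i, (m : ℝ) ^ (-p) * (1 + p * ((m : ℝ) * z i - 1)) < A := by
        apply Finset.sum_lt_sum
        · intro i _
          rw [hterm i]
          exact mul_le_mul_of_nonneg_left
            (bern_neg_le (mul_pos hM (hz i)) hp0) (Real.rpow_nonneg hM.le _)
        · refine ⟨k, Finset.mem_univ k, ?_⟩
          rw [hterm k]
          exact mul_lt_mul_of_pos_left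
            (bern_neg_lt (mul_pos hM (hz k)) hk hp0) (Real.rpow_pos_of_pos hM _)
      rw [← Finset.mul_sum, hlin, mul_comm, hmpow] at this
      exact this
    rw [hsign, neg_one_mul, neg_one_mul]
    constructor
    · apply neg_le_neg
      calc (m : ℝ) = ((m : ℝ) ^ β) ^ (1 / β) := by
            rw [← Real.rpow_mul hM.le, mul_one_div, div_self hβ.ne', Real.rpow_one]
        _ ≤ A ^ (1 / β) :=
            Real.rpow_le_rpow (Real.rpow_nonneg hM.le _) hA_ge (by positivity)
    · constructor
      · intro h
        have h' : A ^ (1 / β) = (m : ℝ) := by linarith [neg_injective h]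
        by_contra hcon
        have := hA_gt (hwit hcon)
        rw [hA_of_root h'] at this
        exact lt_irrefl _ this
      · intro h
        rw [hAroot_of (hA_eq_of (heq_iff.mpr h))]
end

section
/- Let β > 1, let K ≥ 1, and let i, j be two data analysts with positive reals x_i, x_j, μ_i, μ_j, a_i, a_j, nonnegative demands γ_{ik}, γ_{jk} (k = 1,…,K), and nonnegative Lagrange multipliers λ_k, satisfying the stationarity conditions (μ_i a_i)^{1-β}·x_i^{-β} = Σ_k λ_k γ_{ik} a_i and (μ_j a_j)^{1-β}·x_j^{-β} = Σ_k λ_k γ_{jk} a_j. If μ_j a_j x_j > μ_i a_i x_i, then there exists a resource k with γ_{jk} x_j a_j < γ_{ik} x_i a_i. Consequently it is impossible that γ_{jk} x_j a_j ≥ γ_{ik} x_i a_i for every resource k while analyst j's weighted dominant share strictly exceeds analyst i's; i.e., Envy-Freeness holds when β > 1 and λ = (β-1)/β. -/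
open Finset

/-- Envy-Freeness when `β > 1` and `λ = (β-1)/β`: if two analysts `i`, `j` satisfy the
stationarity conditions and `j`'s weighted dominant share strictly exceeds `i`'s, then there
is a resource `k` on which `j` consumes strictly less than `i`; consequently `j`'s
consumption cannot weakly dominate `i`'s on every resource. -/
theorem stmt7 (β : ℝ) (hβ : 1 < β) (K : ℕ) (hK : 1 ≤ K)
    (xi xj μi μj ai aj : ℝ)
    (hxi : 0 < xi) (hxj : 0 < xj) (hμi : 0 < μi) (hμj : 0 < μj)
    (hai : 0 < ai) (haj : 0 < aj)
    (γi γj : Fin K → ℝ) (hγi : ∀ k, 0 ≤ γi k) (hγj : ∀ k, 0 ≤ γj k)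
    (lam : Fin K → ℝ) (hlam : ∀ k, 0 ≤ lam k)
    (hstati : (μi * ai) ^ (1 - β) * xi ^ (-β) = ∑ k, lam k * γi k * ai)
    (hstatj : (μj * aj) ^ (1 - β) * xj ^ (-β) = ∑ k, lam k * γj k * aj)
    (hdom : μi * ai * xi < μj * aj * xj) :
    (∃ k, γj k * xj * aj < γi k * xi * ai) ∧
      ¬ (∀ k, γi k * xi * ai ≤ γj k * xj * aj) := by
  have hA : (0:ℝ) < μi * ai * xi := by positivity
  have hB : (0:ℝ) < μj * aj * xj := by positivity
  have key : ∀ (μ a x : ℝ), 0 < μ → 0 < a → 0 < x →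
      (μ * a) ^ (1 - β) * x ^ (-β) * x = (μ * a * x) ^ (1 - β) := by
    intro μ a x hμ ha hx
    rw [Real.mul_rpow (by positivity) hx.le]
    have : x ^ (1 - β) = x ^ (-β) * x := by
      rw [show (1 - β) = -β + 1 by ring, Real.rpow_add hx, Real.rpow_one]
    rw [this]; ring
  have hi : ∑ k, lam k * γi k * ai * xi = (μi * ai * xi) ^ (1 - β) := by
    rw [← key μi ai xi hμi hai hxi, hstati, Finset.sum_mul]
  have hj : ∑ k, lam k * γj k * aj * xj = (μj * aj * xj) ^ (1 - β) := by
    rw [← key μj aj xj hμj haj hxj, hstatj, Finset.sum_mul]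
  have hex : ∃ k, γj k * xj * aj < γi k * xi * ai := by
    by_contra h
    push_neg at h
    have hsum : ∑ k, lam k * γi k * ai * xi ≤ ∑ k, lam k * γj k * aj * xj := by
      apply Finset.sum_le_sum
      intro k _
      have := h k
      have hl := hlam k
      nlinarith [hl, this]
    rw [hi, hj] at hsum
    have : (μj * aj * xj) ^ (1 - β) < (μi * ai * xi) ^ (1 - β) :=
      Real.rpow_lt_rpow_of_neg hA hdom (by linarith)
    linarith
  refine ⟨hex, ?_⟩
  intro hall
  obtain ⟨k, hk⟩ := hex
  have := hall k
  linarith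
end

section
/- Let γ > 0 and S > 0 be fixed reals, and define G : (0,∞) → ℝ by G(μ) = (γ/μ)^{(β-1)/β} / ((γ/μ)^{(β-1)/β} + S). If β > 1, then G is strictly decreasing in μ; if 0 < β < 1, then G is strictly increasing in μ. Hence when β > 1, a data analyst who lies by reporting a larger dominant demand μ_j strictly decreases its weighted non-dominant share (so only Weak Strategy Proofness holds), while when 0 < β < 1 the lie strictly increases the weighted non-dominant share as well (so neither Weak nor Strong Strategy Proofness holds). -/
lemma frac_mono {x y S : ℝ} (hx : 0 < x) (hxy : x < y) (hS : 0 < S) :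
    x / (x + S) < y / (y + S) := by
  rw [div_lt_div_iff₀ (by linarith) (by linarith)]
  nlinarith

/-- The weighted non-dominant share `G(μ) = (γ/μ)^{(β-1)/β} / ((γ/μ)^{(β-1)/β} + S)` is
strictly decreasing in the reported dominant demand `μ` when `β > 1`, and strictly
increasing when `0 < β < 1`. -/
theorem stmt10 (β γ S : ℝ) (hγ : 0 < γ) (hS : 0 < S) :
    (1 < β → ∀ μ₁ μ₂ : ℝ, 0 < μ₁ → μ₁ < μ₂ →
      (γ / μ₂) ^ ((β - 1) / β) / ((γ / μ₂) ^ ((β - 1) / β) + S) <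
      (γ / μ₁) ^ ((β - 1) / β) / ((γ / μ₁) ^ ((β - 1) / β) + S)) ∧
    (0 < β → β < 1 → ∀ μ₁ μ₂ : ℝ, 0 < μ₁ → μ₁ < μ₂ →
      (γ / μ₁) ^ ((β - 1) / β) / ((γ / μ₁) ^ ((β - 1) / β) + S) <
      (γ / μ₂) ^ ((β - 1) / β) / ((γ / μ₂) ^ ((β - 1) / β) + S)) := by
  constructor
  · intro hβ μ₁ μ₂ h1 h12
    have hb : (γ / μ₂) < (γ / μ₁) := by
      apply div_lt_div_of_pos_left hγ h1 h12
    have hb2 : 0 < γ / μ₂ := div_pos hγ (by linarith)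
    have he : 0 < (β - 1) / β := div_pos (by linarith) (by linarith)
    have := Real.rpow_lt_rpow hb2.le hb he
    exact frac_mono (Real.rpow_pos_of_pos hb2 _) this hS
  · intro hβ0 hβ1 μ₁ μ₂ h1 h12
    have hb : (γ / μ₂) < (γ / μ₁) := by
      apply div_lt_div_of_pos_left hγ h1 h12
    have hb2 : 0 < γ / μ₂ := div_pos hγ (by linarith)
    have he : (β - 1) / β < 0 := div_neg_of_neg_of_pos (by linarith) hβ0
    have := Real.rpow_lt_rpow_of_neg hb2 hb he
    exact frac_mono (Real.rpow_pos_of_pos (div_pos hγ h1) _) this hS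
end
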